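/- arXiv:2003.00398 — 5 statements merged into one kernel-verified Lean document; each statement's English description precedes it below -/
import Mathlib

section
/- For λ ∈ (0,1) and s ∈ ℂ with 0 < Re(s) < 1/λ, the degenerate gamma function satisfies Γ_λ(s) = λ^{-s} · Γ(s)Γ(1/λ − s)/Γ(1/λ). -/
/-!
Substituting `t = u / λ` shows that `Γ_λ(s)` is `λ^(-s)` times the Mellin transform of
`(1 + u)^(-1/λ)` at `s`. The substitution `x = u / (1 + u)` of `(0, ∞)` onto `(0, 1)` identifies
this Mellin transform with the Beta integral `B(s, 1/λ - s) = Γ(s) Γ(1/λ - s) / Γ(1/λ)`.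
-/

open MeasureTheory Complex

/-- The degenerate gamma function, defined as an integral. -/
noncomputable def degGamma (l : ℝ) (s : ℂ) : ℂ :=
  ∫ t in Set.Ioi (0 : ℝ), ((1 + l * t : ℝ) : ℂ) ^ (-(1 / l) : ℂ) * (t : ℂ) ^ (s - 1)

open Set

lemma image_div_one_add_Ioi_zero : (fun u : ℝ => u / (1 + u)) '' Ioi 0 = Ioo 0 1 := by
  ext x
  constructor
  · rintro ⟨u, hu, rfl⟩
    have hu : (0 : ℝ) < u := hu
    exact ⟨by positivity, (div_lt_one (by positivity)).2 (by linarith)⟩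
  · rintro ⟨hx0, hx1⟩
    refine ⟨x / (1 - x), div_pos hx0 (by linarith), ?_⟩
    have : 1 - x ≠ 0 := by linarith
    field_simp
    ring

lemma injOn_div_one_add_Ioi_zero : InjOn (fun u : ℝ => u / (1 + u)) (Ioi 0) := by
  intro a (ha : 0 < a) b (hb : 0 < b) hab
  have h1a : 1 + a ≠ 0 := by positivity
  have h1b : 1 + b ≠ 0 := by positivity
  field_simp at hab
  linarith

lemma hasDerivAt_div_one_add {u : ℝ} (hu : 1 + u ≠ 0) :
    HasDerivAt (fun u : ℝ => u / (1 + u)) ((1 + u) ^ 2)⁻¹ u := by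
  refine ((hasDerivAt_id' u).div ((hasDerivAt_id' u).const_add 1) hu).congr_deriv ?_
  field_simp
  ring

lemma abs_deriv_smul_betaIntegrand_div_one_add {u : ℝ} (hu : 0 < u) (s t : ℂ) :
    |((1 + u) ^ 2)⁻¹| • (((u / (1 + u) : ℝ) : ℂ) ^ (s - 1) *
        (1 - ((u / (1 + u) : ℝ) : ℂ)) ^ (t - 1)) =
      (u : ℂ) ^ (s - 1) • ((1 + u : ℝ) : ℂ) ^ (-(s + t)) := by
  have hv : (0 : ℝ) < 1 + u := by linarith
  set v : ℝ := 1 + u with hv_def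
  have hvc : (v : ℂ) ≠ 0 := ofReal_ne_zero.2 hv.ne'
  have h_one_sub : (1 : ℂ) - (u : ℂ) / (v : ℂ) = (v : ℂ)⁻¹ := by
    field_simp
    push_cast [hv_def]
    ring
  have h_exp : (v : ℂ) ^ (s + t) = (v : ℂ) ^ (s - 1) * (v : ℂ) ^ (t - 1) * (v : ℂ) ^ 2 := by
    rw [← cpow_add _ _ hvc, ← cpow_natCast, ← cpow_add _ _ hvc]
    ring_nf
  rw [abs_of_pos (by positivity), ofReal_div, div_cpow_ofReal_nonneg hu.le hv.le, h_one_sub,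
    inv_cpow_ofReal_nonneg hv.le, cpow_neg, h_exp, real_smul, smul_eq_mul]
  push_cast
  ring

theorem Complex.betaIntegral_eq_mellin (s t : ℂ) :
    betaIntegral s t = mellin (fun u : ℝ => ((1 + u : ℝ) : ℂ) ^ (-(s + t))) s := by
  rw [betaIntegral, intervalIntegral.integral_of_le zero_le_one, integral_Ioc_eq_integral_Ioo,
    ← image_div_one_add_Ioi_zero,
    integral_image_eq_integral_abs_deriv_smul measurableSet_Ioi
      (fun u (hu : 0 < u) => (hasDerivAt_div_one_add (by linarith)).hasDerivWithinAt)
      injOn_div_one_add_Ioi_zero]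
  exact setIntegral_congr_fun measurableSet_Ioi fun u hu =>
    abs_deriv_smul_betaIntegrand_div_one_add hu s t

lemma degGamma_eq_mellin (l : ℝ) (s : ℂ) :
    degGamma l s = mellin (fun t : ℝ => ((1 + l * t : ℝ) : ℂ) ^ (-(1 / l) : ℂ)) s := by
  simp only [degGamma, mellin, smul_eq_mul, mul_comm]

theorem degGamma_eq_gamma_formula (l : ℝ) (hl : l ∈ Set.Ioo (0 : ℝ) 1)
    (s : ℂ) (hs : 0 < s.re) (hs' : s.re < 1 / l) :
    degGamma l s =
      (l : ℂ) ^ (-s) * Complex.Gamma s * Complex.Gamma (1 / l - s) / Complex.Gamma (1 / l) := by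
  have hre_sub : 0 < (1 / (l : ℂ) - s).re := by
    rw [sub_re, ← ofReal_one, ← ofReal_div, ofReal_re]
    linarith
  set f : ℝ → ℂ := fun u => ((1 + u : ℝ) : ℂ) ^ (-(1 / l : ℂ))
  calc degGamma l s = mellin (fun t => f (l * t)) s := degGamma_eq_mellin l s
    _ = (l : ℂ) ^ (-s) • mellin f s := mellin_comp_mul_left f s hl.1
    _ = (l : ℂ) ^ (-s) * betaIntegral s (1 / l - s) := by
        rw [betaIntegral_eq_mellin, add_sub_cancel, smul_eq_mul]
    _ = _ := by
        rw [betaIntegral_eq_Gamma_mul_div _ _ hs hre_sub, add_sub_cancel]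
        ring
end

section
/- For λ ∈ (0,1) and s ∈ ℂ with 0 < Re(s) < 1/λ, the degenerate gamma function satisfies Γ_λ(s) = λ^{-s} · B(s, 1/λ − s), where B is the Beta function. -/
open MeasureTheory Complex

lemma inv_cpow_ofReal {x : ℝ} (hx : 0 < x) (w : ℂ) :
    ((x⁻¹ : ℝ) : ℂ) ^ w = ((x : ℂ)) ^ (-w) := by
  rw [Complex.ofReal_inv, Complex.inv_cpow _ _ (by
    rw [Complex.arg_ofReal_of_nonneg hx.le]; exact (Real.pi_ne_zero).symm),
    ← Complex.cpow_neg]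

theorem degGamma_eq_beta (l : ℝ) (hl : l ∈ Set.Ioo (0 : ℝ) 1)
    (s : ℂ) (hs : 0 < s.re) (hs' : s.re < 1 / l) :
    degGamma l s = (l : ℂ) ^ (-s) * Complex.betaIntegral s (1 / l - s) := by
  obtain ⟨hl0, hl1⟩ := hl
  have hlne : (l : ℂ) ≠ 0 := Complex.ofReal_ne_zero.mpr hl0.ne'
  set f : ℝ → ℝ := fun u => u / (l * (1 - u)) with hfdef
  have himg : f '' Set.Ioo 0 1 = Set.Ioi 0 := by
    ext x
    constructor
    · rintro ⟨u, ⟨hu0, hu1⟩, rfl⟩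
      exact div_pos hu0 (mul_pos hl0 (by linarith))
    · intro hx
      have hx0 : (0 : ℝ) < x := hx
      refine ⟨l * x / (1 + l * x), ⟨?_, ?_⟩, ?_⟩
      · positivity
      · rw [div_lt_one (by positivity)]; nlinarith
      · have h1 : (0:ℝ) < 1 + l * x := by positivity
        simp only [hfdef]
        rw [div_eq_iff (by
          intro h
          apply absurd h
          field_simp
          intro h2
          nlinarith [mul_pos hl0 hx0])]
        field_simp
        ring
  have hderiv : ∀ u ∈ Set.Ioo (0:ℝ) 1,
      HasDerivWithinAt f ((l * (1 - u) ^ 2)⁻¹) (Set.Ioo 0 1) u := by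
    intro u hu
    have hne : l * (1 - u) ≠ 0 := by
      have : (0:ℝ) < 1 - u := by linarith [hu.2]
      positivity
    have hu2 : (1 - u) ≠ 0 := by intro h; have := hu.2; linarith
    have hd := (hasDerivAt_id u).div (((hasDerivAt_id u).const_sub 1).const_mul l) hne
    try simp only [id_eq] at hd
    have heq : (1 * (l * (1 - u)) - u * (l * -1)) / (l * (1 - u)) ^ 2
        = (l * (1 - u) ^ 2)⁻¹ := by
      field_simp
      ring
    rw [heq] at hd
    exact hd.hasDerivWithinAt
  have hinj : Set.InjOn f (Set.Ioo 0 1) := by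
    rintro u ⟨hu0, hu1⟩ v ⟨hv0, hv1⟩ h
    simp only [hfdef] at h
    have h1 : (0:ℝ) < 1 - u := by linarith
    have h2 : (0:ℝ) < 1 - v := by linarith
    field_simp at h
    nlinarith
  have key := integral_image_eq_integral_abs_deriv_smul measurableSet_Ioo hderiv hinj
      (fun x : ℝ => ((1 + l * x : ℝ) : ℂ) ^ (-(1 / (l:ℂ))) * (x : ℂ) ^ (s - 1))
  rw [himg] at key
  rw [degGamma, key, Complex.betaIntegral, intervalIntegral.integral_of_le zero_le_one,
    MeasureTheory.integral_Ioc_eq_integral_Ioo, ← MeasureTheory.integral_const_mul]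
  refine setIntegral_congr_fun measurableSet_Ioo (fun u hu => ?_)
  obtain ⟨hu0, hu1⟩ := hu
  have ha : (0:ℝ) < 1 - u := by linarith
  have hane : ((1 - u : ℝ) : ℂ) ≠ 0 := Complex.ofReal_ne_zero.mpr ha.ne'
  have h2 : (f u : ℝ) = u * l⁻¹ * (1 - u)⁻¹ := by
    simp only [hfdef]; field_simp [hl0.ne', ha.ne']
  have h1 : (1 + l * (u * l⁻¹ * (1 - u)⁻¹) : ℝ) = (1 - u)⁻¹ := by
    field_simp [hl0.ne', ha.ne']
    ring
  simp only [h2, h1, abs_of_pos (by positivity : (0:ℝ) < (l * (1 - u) ^ 2)⁻¹),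
    Complex.real_smul]
  have hm1 : ((u * l⁻¹ * (1 - u)⁻¹ : ℝ) : ℂ) ^ (s - 1)
      = ((u * l⁻¹ : ℝ) : ℂ) ^ (s - 1) * (((1 - u)⁻¹ : ℝ) : ℂ) ^ (s - 1) := by
    rw [Complex.ofReal_mul]
    exact mul_cpow_ofReal_nonneg (by positivity) (by positivity) _
  have hm2 : ((u * l⁻¹ : ℝ) : ℂ) ^ (s - 1)
      = ((u : ℝ) : ℂ) ^ (s - 1) * ((l⁻¹ : ℝ) : ℂ) ^ (s - 1) := by
    rw [Complex.ofReal_mul]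
    exact mul_cpow_ofReal_nonneg hu0.le (by positivity) _
  rw [hm1, hm2, inv_cpow_ofReal hl0, inv_cpow_ofReal ha, inv_cpow_ofReal ha, neg_neg]
  push_cast
  rw [show ((l:ℂ) * ((1:ℂ) - u) ^ 2)⁻¹ = (l:ℂ)⁻¹ * (((1:ℂ) - u) ^ 2)⁻¹ by
    rw [mul_inv]]
  have hl2 : (l:ℂ) ^ (-s) = (l:ℂ)⁻¹ * (l:ℂ) ^ (-(s - 1)) := by
    rw [← Complex.cpow_neg_one, ← Complex.cpow_add _ _ hlne, show (-1 : ℂ) + -(s-1) = -s by ring]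
  have ha2 : ((1:ℂ) - u) ^ (1 / (l:ℂ) - s - 1)
      = (((1:ℂ) - u) ^ 2)⁻¹ * (((1:ℂ) - u) ^ (1 / (l:ℂ)) * ((1:ℂ) - u) ^ (-(s - 1))) := by
    have hne : ((1:ℂ) - u) ≠ 0 := by rwa [show (1:ℂ) - u = ((1 - u : ℝ):ℂ) by push_cast; ring]
    rw [show (1 / (l:ℂ) - s - 1) = (-2) + (1 / (l:ℂ) + -(s - 1)) by ring,
      Complex.cpow_add _ _ hne, Complex.cpow_add _ _ hne,
      show ((-2 : ℂ)) = -(2:ℂ) by norm_num, Complex.cpow_neg, Complex.cpow_two]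
    try ring
  rw [hl2, ha2]
  ring
end

section
/- For λ ∈ (0,1), the function λ^s Γ_λ(s) is symmetric under s ↦ 1/λ − s; that is, λ^s Γ_λ(s) = λ^{1/λ − s} Γ_λ(1/λ − s) for all s with 0 < Re(s) < 1/λ. -/
open MeasureTheory Complex

lemma elog {a : ℝ} (ha : 0 < a) (c : ℂ) : (a : ℂ) ^ c = Complex.exp ((Real.log a : ℂ) * c) := by
  rw [Complex.cpow_def_of_ne_zero (by exact_mod_cast ha.ne'), Complex.ofReal_log ha.le]

lemma ecoe {a : ℝ} (ha : 0 < a) : ((a : ℝ) : ℂ) = Complex.exp ((Real.log a : ℂ)) := by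
  rw [← Complex.ofReal_exp, Real.exp_log ha]

lemma degGamma_eq (l : ℝ) (hl : l ∈ Set.Ioo (0 : ℝ) 1) (s : ℂ) :
    degGamma l s = (l : ℂ) ^ ((1 / l : ℂ) - 2 * s) * degGamma l (1 / l - s) := by
  obtain ⟨hl0, hl1⟩ := hl
  set g : ℝ → ℂ := fun t => ((1 + l * t : ℝ) : ℂ) ^ (-(1 / l) : ℂ) * (t : ℂ) ^ (s - 1) with hg
  set h : ℝ → ℂ := fun x => (|(-1 : ℝ)| * x ^ ((-1 : ℝ) - 1)) • g (x ^ (-1 : ℝ)) with hh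
  have step1 : degGamma l s = ∫ x in Set.Ioi (0 : ℝ), h x :=
    (integral_comp_rpow_Ioi g (p := -1) (by norm_num)).symm
  have step2 : (∫ u in Set.Ioi (0 : ℝ), h (l ^ 2 * u)) =
      (l ^ 2)⁻¹ • ∫ x in Set.Ioi (0 : ℝ), h x := by
    have := integral_comp_mul_left_Ioi h 0 (b := l ^ 2) (by positivity)
    rwa [mul_zero] at this
  have hl2 : (l ^ 2 : ℝ) ≠ 0 := by positivity
  have step3 : degGamma l s = ∫ u in Set.Ioi (0 : ℝ), (l ^ 2 : ℝ) • h (l ^ 2 * u) := by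
    rw [integral_smul, step2, smul_smul, mul_inv_cancel₀ hl2, one_smul, step1]
  rw [step3]
  have key : ∀ u ∈ Set.Ioi (0 : ℝ), (l ^ 2 : ℝ) • h (l ^ 2 * u) =
      (l : ℂ) ^ ((1 / l : ℂ) - 2 * s) *
        (((1 + l * u : ℝ) : ℂ) ^ (-(1 / l) : ℂ) * (u : ℂ) ^ ((1 / l - s) - 1)) := by
    intro u hu
    have hu : 0 < u := hu
    simp only [hh, hg, smul_smul, Complex.real_smul]
    have hb : (0:ℝ) < l ^ 2 * u := by positivity
    rw [Real.rpow_neg_one (l ^ 2 * u), show ((-1:ℝ) - 1) = (-2 : ℝ) by norm_num,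
      abs_neg, abs_one, one_mul]
    have h1 : (1 + l * (l^2*u)⁻¹ : ℝ) = (1 + l*u) * (l*u)⁻¹ := by field_simp; ring
    have L1a : Real.log (l^2) = 2*Real.log l := by
      rw [Real.log_pow]; push_cast; ring
    have L1b : Real.log ((l^2*u) ^ (-2:ℝ)) = -4*Real.log l - 2*Real.log u := by
      rw [Real.log_rpow (by positivity), Real.log_mul (by positivity) hu.ne', Real.log_pow]
      push_cast; ring
    have L2 : Real.log (1 + l * (l^2*u)⁻¹) = Real.log (1+l*u) - Real.log l - Real.log u := by
      rw [h1, Real.log_mul (by positivity) (by positivity), Real.log_inv,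
        Real.log_mul hl0.ne' hu.ne']; ring
    have L3 : Real.log ((l^2*u)⁻¹) = -2*Real.log l - Real.log u := by
      rw [Real.log_inv, Real.log_mul (by positivity) hu.ne', Real.log_pow]; push_cast; ring
    rw [ecoe (by positivity : (0:ℝ) < l^2), ecoe (by positivity : (0:ℝ) < (l^2*u) ^ (-2:ℝ)),
      elog (a := 1 + l * (l^2*u)⁻¹) (by positivity),
      elog (a := (l^2*u)⁻¹) (by positivity), elog hl0, elog (a := 1 + l*u) (by positivity),
      elog hu]
    simp only [← Complex.exp_add]
    rw [L1a, L1b, L2, L3]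
    congr 1
    push_cast
    ring
  rw [setIntegral_congr_fun measurableSet_Ioi key, integral_const_mul]
  rfl

theorem degGamma_symmetry (l : ℝ) (hl : l ∈ Set.Ioo (0 : ℝ) 1)
    (s : ℂ) (hs : 0 < s.re) (hs' : s.re < 1 / l) :
    (l : ℂ) ^ s * degGamma l s = (l : ℂ) ^ ((1 / l : ℂ) - s) * degGamma l (1 / l - s) := by
  rw [degGamma_eq l hl s, ← mul_assoc, ← Complex.cpow_add _ _ (by exact_mod_cast hl.1.ne')]
  congr 2
  ring
end

section
/- Let λ ∈ (0,1) and let k be a nonnegative integer with k+1 < 1/λ. Then Γ_λ(k+1) = Γ(k+1)/(1)_{k+2,λ} = k! / ((1−λ)(1−2λ)⋯(1−(k+1)λ)). -/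
open MeasureTheory Complex

/-!
Integrating by parts against `t ^ (k + 1)` gives the recursion
`∫₀^∞ (1 + l t)^(-a) t^(k+1) dt = (k + 1) / (l (a - 1)) · ∫₀^∞ (1 + l t)^(1-a) t^k dt`,
valid when `k + 2 < a` (the boundary terms vanish), and the base case is
`∫₀^∞ (1 + l t)^(-a) dt = 1 / (l (a - 1))`. Hence
`∫₀^∞ (1 + l t)^(-a) t^k dt = k! / ∏_{j=1}^{k+1} l (a - j)`, and for `a = 1 / l` the factors
`l (1 / l - j)` are `1 - j l`.
-/

open Set Filter Topology
open scoped Nat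

section OneAddMulRpow

variable {l : ℝ}

lemma hasDerivAt_one_add_mul_rpow_neg_div (hl : 0 < l) {a x : ℝ} (ha : a ≠ 1) (hx : 0 ≤ x) :
    HasDerivAt (fun t => -(1 + l * t) ^ (-(a - 1)) / (l * (a - 1))) ((1 + l * x) ^ (-a)) x := by
  have hx' : 0 < 1 + l * x := by positivity
  have hlin : HasDerivAt (fun t => 1 + l * t) l x := by
    simpa using ((hasDerivAt_id x).const_mul l).const_add 1
  refine (((hlin.rpow_const (p := -(a - 1)) (Or.inl hx'.ne')).neg).div_const
    (l * (a - 1))).congr_deriv ?_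
  have : l * (a - 1) ≠ 0 := mul_ne_zero hl.ne' (sub_ne_zero.mpr ha)
  rw [show -(a - 1) - 1 = -a by ring]
  field_simp

lemma tendsto_one_add_mul_rpow_neg_atTop (hl : 0 < l) {b : ℝ} (hb : 0 < b) :
    Tendsto (fun t => (1 + l * t) ^ (-b)) atTop (𝓝 0) :=
  (tendsto_rpow_neg_atTop hb).comp
    (tendsto_atTop_add_const_left _ 1 (tendsto_id.const_mul_atTop hl))

lemma integrableOn_one_add_mul_rpow_neg (hl : 0 < l) {a : ℝ} (ha : 1 < a) :
    IntegrableOn (fun t => (1 + l * t) ^ (-a)) (Ioi 0) := by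
  refine integrableOn_Ioi_deriv_of_nonneg'
    (fun x hx => hasDerivAt_one_add_mul_rpow_neg_div hl ha.ne' hx)
    (fun x hx => ?_) (l := 0) ?_
  · have : 0 < 1 + l * x := by have := hx.out; positivity
    positivity
  · simpa using ((tendsto_one_add_mul_rpow_neg_atTop hl (sub_pos.mpr ha)).neg).div_const _

lemma integral_one_add_mul_rpow_neg (hl : 0 < l) {a : ℝ} (ha : 1 < a) :
    ∫ t in Ioi 0, (1 + l * t) ^ (-a) = 1 / (l * (a - 1)) := by
  rw [integral_Ioi_of_hasDerivAt_of_tendsto'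
    (fun x hx => hasDerivAt_one_add_mul_rpow_neg_div hl ha.ne' hx)
    (integrableOn_one_add_mul_rpow_neg hl ha)
    (by simpa using ((tendsto_one_add_mul_rpow_neg_atTop hl (sub_pos.mpr ha)).neg).div_const _)]
  simp [neg_div, one_div]

lemma one_add_mul_rpow_mul_pow_le (hl : 0 < l) {t : ℝ} (ht : 0 ≤ t) (c : ℝ) (k : ℕ) :
    (1 + l * t) ^ c * t ^ k ≤ (1 + l * t) ^ (c + k) / l ^ k := by
  have hpos : 0 < 1 + l * t := by positivity
  have ht_le : t ≤ (1 + l * t) / l := by rw [le_div_iff₀ hl]; nlinarith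
  calc (1 + l * t) ^ c * t ^ k ≤ (1 + l * t) ^ c * ((1 + l * t) / l) ^ k := by gcongr
    _ = (1 + l * t) ^ (c + k) / l ^ k := by
      rw [div_pow, Real.rpow_add hpos, Real.rpow_natCast]; ring

lemma integrableOn_one_add_mul_rpow_neg_mul_pow (hl : 0 < l) {a : ℝ} {k : ℕ}
    (ha : k + 1 < a) : IntegrableOn (fun t => (1 + l * t) ^ (-a) * t ^ k) (Ioi 0) := by
  refine ((integrableOn_one_add_mul_rpow_neg hl (a := a - k) (by linarith)).div_const (l ^ k)).mono'
    ?_ ?_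
  · refine ContinuousOn.aestronglyMeasurable (fun t ht => ?_) measurableSet_Ioi
    have : 0 < 1 + l * t := by have := ht.out; positivity
    exact ContinuousAt.continuousWithinAt (by fun_prop (disch := exact Or.inl this.ne'))
  · filter_upwards [ae_restrict_mem measurableSet_Ioi] with t ht
    have := ht.out
    have : 0 < 1 + l * t := by positivity
    rw [Real.norm_of_nonneg (by positivity), show -(a - k) = -a + k by ring]
    exact one_add_mul_rpow_mul_pow_le hl ht.out.le _ _

lemma tendsto_pow_mul_one_add_mul_rpow_neg_atTop (hl : 0 < l) {b : ℝ} {n : ℕ} (hn : n < b) :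
    Tendsto (fun t => t ^ n * (1 + l * t) ^ (-b)) atTop (𝓝 0) := by
  refine squeeze_zero' ?_ ?_ ((tendsto_one_add_mul_rpow_neg_atTop hl (sub_pos.mpr hn)).div_const
    (l ^ n) |>.trans (by simp))
  · filter_upwards [eventually_ge_atTop 0] with t ht
    have : 0 < 1 + l * t := by positivity
    positivity
  · filter_upwards [eventually_ge_atTop 0] with t ht
    rw [mul_comm, show -(b - n) = -b + n by ring]
    exact one_add_mul_rpow_mul_pow_le hl ht _ _

lemma integral_one_add_mul_rpow_neg_mul_pow_succ (hl : 0 < l) {a : ℝ} {k : ℕ}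
    (ha : k + 2 < a) :
    ∫ t in Ioi 0, (1 + l * t) ^ (-a) * t ^ (k + 1) =
      (k + 1) / (l * (a - 1)) * ∫ t in Ioi 0, (1 + l * t) ^ (-(a - 1)) * t ^ k := by
  set v : ℝ → ℝ := fun t => -(1 + l * t) ^ (-(a - 1)) / (l * (a - 1))
  have hv : ∀ x ∈ Ioi (0 : ℝ), HasDerivAt v ((1 + l * x) ^ (-a)) x := fun x hx =>
    hasDerivAt_one_add_mul_rpow_neg_div hl (by linarith [k.cast_nonneg (α := ℝ)]) hx.out.le
  have hu : ∀ x ∈ Ioi (0 : ℝ), HasDerivAt (fun t => t ^ (k + 1)) ((k + 1) * x ^ k) x :=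
    fun x _ => by simpa using hasDerivAt_pow (k + 1) x
  have hu'v : (fun t => (k + 1) * t ^ k * v t) =
      fun t => -((k + 1) / (l * (a - 1))) * ((1 + l * t) ^ (-(a - 1)) * t ^ k) := by
    ext t; simp only [v]; ring
  have huv'_int : IntegrableOn (fun t => t ^ (k + 1) * (1 + l * t) ^ (-a)) (Ioi 0) :=
    (integrableOn_one_add_mul_rpow_neg_mul_pow hl (k := k + 1) (by push_cast; linarith)).congr_fun
      (fun t _ => mul_comm _ _) measurableSet_Ioi
  have hu'v_int : IntegrableOn (fun t => (k + 1) * t ^ k * v t) (Ioi 0) :=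
    hu'v ▸ (integrableOn_one_add_mul_rpow_neg_mul_pow hl (a := a - 1) (by linarith)).const_mul _
  have h_zero : Tendsto (fun t => t ^ (k + 1) * v t) (𝓝[>] 0) (𝓝 0) := by
    have : 0 < 1 + l * 0 := by simp
    have hv0 : ContinuousAt (fun t => t ^ (k + 1) * v t) 0 := by
      fun_prop (disch := exact Or.inl this.ne')
    simpa using hv0.tendsto.mono_left nhdsWithin_le_nhds
  have h_infty : Tendsto (fun t => t ^ (k + 1) * v t) atTop (𝓝 0) := by
    have := ((tendsto_pow_mul_one_add_mul_rpow_neg_atTop hl (n := k + 1) (b := a - 1)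
      (by push_cast; linarith)).neg.div_const (l * (a - 1)))
    simpa only [v, neg_zero, zero_div, mul_div_assoc, neg_div, mul_neg] using this
  have ibp := integral_Ioi_mul_deriv_eq_deriv_mul hu hv huv'_int hu'v_int h_zero h_infty
  rw [hu'v, integral_const_mul] at ibp
  rw [setIntegral_congr_fun measurableSet_Ioi (fun t _ => mul_comm _ _), ibp]
  ring

lemma integral_one_add_mul_rpow_neg_mul_pow (hl : 0 < l) (k : ℕ) {a : ℝ} (ha : k + 1 < a) :
    ∫ t in Ioi 0, (1 + l * t) ^ (-a) * t ^ k =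
      k ! / ∏ i ∈ Finset.range (k + 1), (l * (a - (i + 1))) := by
  induction k generalizing a with
  | zero =>
    simpa using integral_one_add_mul_rpow_neg hl (by simpa using ha)
  | succ k ih =>
    push_cast at ha
    rw [integral_one_add_mul_rpow_neg_mul_pow_succ hl (by linarith), ih (by linarith),
      Finset.prod_range_succ' _ (k + 1), Nat.factorial_succ, div_mul_div_comm,
      mul_comm (l * (a - 1))]
    push_cast
    congr 2
    · exact Finset.prod_congr rfl fun i _ => by ring
    · ring

end OneAddMulRpow

lemma degGamma_natCast_add_one {l : ℝ} (hl : 0 ≤ l) (k : ℕ) :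
    degGamma l (k + 1) = ((∫ t in Ioi 0, (1 + l * t) ^ (-(1 / l)) * t ^ k : ℝ) : ℂ) := by
  rw [degGamma, ← integral_complex_ofReal]
  refine setIntegral_congr_fun measurableSet_Ioi fun t ht => ?_
  have : 0 ≤ 1 + l * t := by have := ht.out; positivity
  rw [add_sub_cancel_right, cpow_natCast, ofReal_mul, ofReal_pow, ofReal_cpow this]
  push_cast
  rfl

theorem degGamma_nat_succ (l : ℝ) (hl : l ∈ Set.Ioo (0 : ℝ) 1)
    (k : ℕ) (hk : (k : ℝ) + 1 < 1 / l) :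
    degGamma l ((k : ℂ) + 1) =
      ((Nat.factorial k) : ℂ) / ∏ j ∈ Finset.Icc 1 (k + 1), (1 - (j : ℂ) * l) := by
  have hl0 := hl.1
  have hprod : ∏ i ∈ Finset.range (k + 1), (l * (1 / l - (i + 1))) =
      ∏ i ∈ Finset.range (k + 1), (1 - ((i + 1 : ℕ) : ℝ) * l) :=
    Finset.prod_congr rfl fun i _ => by field_simp; push_cast; ring
  rw [degGamma_natCast_add_one hl0.le, integral_one_add_mul_rpow_neg_mul_pow hl0 k hk, hprod,
    Finset.range_eq_Ico, Finset.prod_Ico_add' (fun j : ℕ => 1 - (j : ℝ) * l) 0 (k + 1) 1,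
    zero_add, Finset.Ico_add_one_right_eq_Icc]
  push_cast
  rfl
end

section
/- For λ ∈ (0,1), the reciprocal of the degenerate gamma function admits the Weierstrass-type product: 1/Γ_λ(z) = λ^z Γ(1/λ) z (1/λ − z) e^{γ/λ} ∏_{n=1}^∞ [ e^{-1/(nλ)} (1 + z/n)(1 + (1/λ − z)/n) ], valid for 0 < Re(z) < 1/λ, where γ is the Euler–Mascheroni constant. -/
/-!
Scaling `t ↦ t / λ` and substituting `t = x / (1 - x)` turn `Γ_λ(z)` into `λ^{-z} B(z, 1/λ - z)`,
hence `1/Γ_λ(z) = λ^z Γ(1/λ) / (Γ(z) Γ(1/λ - z))`. As `z + (1/λ - z) = 1/λ`, the factors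
`e^{γ/λ}` and `e^{-1/(nλ)}` split between the two arguments, and the partial product becomes
`λ^z Γ(1/λ)` times the Weierstrass partial products of `1/Γ` at `z` and at `1/λ - z`. At `N` such a
partial product equals `e^{u (γ - (H_N - log N))} / GammaSeq u N`, which tends to `1/Γ(u)`.
-/

open MeasureTheory Complex Filter

open Finset Topology
open scoped Nat

local notation "γ" => Real.eulerMascheroniConstant

noncomputable def invGammaPartialProd (u : ℂ) (N : ℕ) : ℂ :=
  u * exp (γ * u) * ∏ n ∈ range N, (1 + u / (n + 1)) * exp (-(u / (n + 1)))

-- If some `u + j` vanishes, both sides are `0`: then `GammaSeq u N = 0` and `x / 0 = 0`.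
lemma mul_prod_one_add_div_eq_cpow_div_GammaSeq (u : ℂ) {N : ℕ} (hN : N ≠ 0) :
    u * ∏ n ∈ range N, (1 + u / (n + 1)) = (N : ℂ) ^ u / GammaSeq u N := by
  have hfac : ∏ n ∈ range N, ((n : ℂ) + 1) = N ! := by
    exact_mod_cast prod_range_add_one_eq_factorial N
  have hprod : u * ∏ n ∈ range N, (1 + u / (n + 1)) = (∏ j ∈ range (N + 1), (u + j)) / N ! := by
    rw [prod_range_succ', ← hfac, mul_div_right_comm, ← prod_div_distrib]
    push_cast
    rw [mul_comm, add_zero]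
    congr 1
    refine prod_congr rfl fun n _ => ?_
    field_simp
    ring
  have hNu : (N : ℂ) ^ u ≠ 0 := cpow_ne_zero_iff.2 (Or.inl (by exact_mod_cast hN))
  rw [hprod, GammaSeq, div_div_eq_mul_div, mul_div_mul_left _ _ hNu]

lemma invGammaPartialProd_eq (u : ℂ) {N : ℕ} (hN : N ≠ 0) :
    invGammaPartialProd u N =
      exp (u * ↑(γ - ((harmonic N : ℝ) - Real.log N))) / GammaSeq u N := by
  have hsum : ∑ n ∈ range N, -(u / (n + 1)) = -(u * (harmonic N : ℝ)) := by
    simp only [harmonic, Rat.cast_sum, Rat.cast_inv, Rat.cast_natCast, ofReal_sum, ofReal_inv,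
      ofReal_natCast, mul_sum, ← sum_neg_distrib, div_eq_mul_inv]
    push_cast
    rfl
  have hcpow : (N : ℂ) ^ u = exp (u * Real.log N) := by
    rw [cpow_def_of_ne_zero (by exact_mod_cast hN), ofReal_log N.cast_nonneg, ofReal_natCast,
      mul_comm]
  rw [invGammaPartialProd, prod_mul_distrib, ← exp_sum, hsum]
  calc _ = exp (γ * u) * exp (-(u * (harmonic N : ℝ))) *
        (u * ∏ n ∈ range N, (1 + u / (n + 1))) := by ring
    _ = _ := by
      rw [mul_prod_one_add_div_eq_cpow_div_GammaSeq u hN, hcpow, mul_div_assoc', ← exp_add,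
        ← exp_add]
      push_cast
      ring_nf

lemma invGammaPartialProd_neg_natCast {m N : ℕ} (hN : m < N) :
    invGammaPartialProd (-m) N = 0 := by
  rcases m with _ | k
  · simp [invGammaPartialProd]
  · rw [invGammaPartialProd, prod_eq_zero (mem_range.2 (Nat.lt_of_succ_lt hN))]
    · rw [mul_zero]
    · push_cast
      rw [neg_div, div_self (by exact_mod_cast k.succ_ne_zero), add_neg_cancel, zero_mul]

lemma tendsto_invGammaPartialProd (u : ℂ) :
    Tendsto (invGammaPartialProd u) atTop (𝓝 (Gamma u)⁻¹) := by
  by_cases hu : Gamma u = 0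
  · obtain ⟨m, rfl⟩ := (Gamma_eq_zero_iff u).1 hu
    rw [hu, inv_zero]
    exact tendsto_const_nhds.congr' <| (eventually_gt_atTop m).mono fun N hN =>
      (invGammaPartialProd_neg_natCast hN).symm
  have hexp : Tendsto (fun N : ℕ => exp (u * ↑(γ - ((harmonic N : ℝ) - Real.log N)))) atTop
      (𝓝 1) := by
    have h := Real.tendsto_harmonic_sub_log.const_sub γ
    rw [sub_self] at h
    have hcont : Continuous fun x : ℝ => exp (u * x) := by fun_prop
    simpa only [Function.comp_def, ofReal_zero, mul_zero, exp_zero] using (hcont.tendsto 0).comp h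
  have hlim := hexp.div (GammaSeq_tendsto_Gamma u) hu
  rw [one_div] at hlim
  exact hlim.congr' <| (eventually_ne_atTop 0).mono fun N hN =>
    (invGammaPartialProd_eq u hN).symm

lemma image_div_one_sub_Ioo : (fun x : ℝ => x / (1 - x)) '' Set.Ioo 0 1 = Set.Ioi 0 := by
  ext t
  constructor
  · rintro ⟨x, ⟨hx0, hx1⟩, rfl⟩
    exact div_pos hx0 (sub_pos.2 hx1)
  · intro (ht : 0 < t)
    refine ⟨t / (1 + t), ⟨by positivity, (div_lt_one (by positivity)).2 (by linarith)⟩, ?_⟩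
    field_simp
    ring

lemma injOn_div_one_sub_Ioo : Set.InjOn (fun x : ℝ => x / (1 - x)) (Set.Ioo 0 1) := by
  intro x ⟨_, hx1⟩ y ⟨_, hy1⟩ h
  rw [div_eq_div_iff (sub_pos.2 hx1).ne' (sub_pos.2 hy1).ne'] at h
  linear_combination h

lemma hasDerivAt_div_one_sub {x : ℝ} (hx : x ≠ 1) :
    HasDerivAt (fun x : ℝ => x / (1 - x)) ((1 - x) ^ 2)⁻¹ x := by
  have hx' : 1 - x ≠ 0 := sub_ne_zero.2 hx.symm
  refine ((hasDerivAt_id' x).div ((hasDerivAt_id' x).const_sub 1) hx').congr_deriv ?_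
  field_simp
  ring

lemma ofReal_cpow_eq_exp {r : ℝ} (hr : 0 < r) (s : ℂ) : (r : ℂ) ^ s = exp (Real.log r * s) := by
  rw [cpow_def_of_ne_zero (ofReal_ne_zero.2 hr.ne'), ofReal_log hr.le]

lemma integral_Ioi_one_add_cpow_mul_cpow (a b : ℂ) :
    ∫ t in Set.Ioi (0 : ℝ), ((1 + t : ℝ) : ℂ) ^ (-(a + b)) * (t : ℂ) ^ (a - 1) =
      betaIntegral a b := by
  have hderiv : ∀ x ∈ Set.Ioo (0 : ℝ) 1,
      HasDerivWithinAt (fun x : ℝ => x / (1 - x)) ((1 - x) ^ 2)⁻¹ (Set.Ioo 0 1) x :=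
    fun x hx => (hasDerivAt_div_one_sub hx.2.ne).hasDerivWithinAt
  rw [← image_div_one_sub_Ioo, integral_image_eq_integral_abs_deriv_smul measurableSet_Ioo hderiv
    injOn_div_one_sub_Ioo, betaIntegral, intervalIntegral.integral_of_le zero_le_one,
    integral_Ioc_eq_integral_Ioo]
  refine setIntegral_congr_fun measurableSet_Ioo fun x ⟨hx0, hx1⟩ => ?_
  have hy : 0 < 1 - x := sub_pos.2 hx1
  have hscalar : (((1 - x) ^ 2)⁻¹ : ℝ) = Real.exp (-(2 * Real.log (1 - x))) := by
    rw [Real.exp_neg, two_mul, Real.exp_add, Real.exp_log hy, sq]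
  have hbase : 1 + x / (1 - x) = (1 - x)⁻¹ := by field_simp; ring
  -- All bases are positive reals: write every factor as `exp` of a combination of `log x`,
  -- `log (1 - x)` and compare exponents.
  rw [abs_of_pos (by positivity), hbase, real_smul, hscalar, ofReal_exp, ← ofReal_one, ← ofReal_sub,
    ofReal_cpow_eq_exp (inv_pos.2 hy), ofReal_cpow_eq_exp (div_pos hx0 hy),
    ofReal_cpow_eq_exp hx0, ofReal_cpow_eq_exp hy, Real.log_inv, Real.log_div hx0.ne' hy.ne',
    ← exp_add, ← exp_add, ← exp_add]
  congr 1
  push_cast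
  ring

theorem degGamma_eq_cpow_mul_betaIntegral {l : ℝ} (hl : 0 < l) (z : ℂ) :
    degGamma l z = (l : ℂ) ^ (-z) * betaIntegral z (1 / l - z) := by
  have hlc : (l : ℂ) ≠ 0 := ofReal_ne_zero.2 hl.ne'
  set g : ℝ → ℂ := fun s => ((1 + s : ℝ) : ℂ) ^ (-(z + (1 / l - z))) * (s : ℂ) ^ (z - 1) with hg
  have hscale : ∀ t ∈ Set.Ioi (0 : ℝ),
      ((1 + l * t : ℝ) : ℂ) ^ (-(1 / l) : ℂ) * (t : ℂ) ^ (z - 1) =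
        (l : ℂ) ^ (1 - z) * g (l * t) := by
    intro t ht
    simp only [hg]
    rw [ofReal_mul, mul_cpow_ofReal_nonneg hl.le (le_of_lt ht), add_sub_cancel, ← neg_sub z 1,
      cpow_neg (l : ℂ)]
    field_simp [cpow_ne_zero_iff.2 (Or.inl hlc)]
  rw [degGamma, setIntegral_congr_fun measurableSet_Ioi hscale, integral_const_mul,
    integral_comp_mul_left_Ioi g 0 hl, mul_zero, hg, integral_Ioi_one_add_cpow_mul_cpow,
    real_smul, ← mul_assoc, ofReal_inv, ← cpow_neg_one, ← cpow_add _ _ hlc]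
  ring_nf

theorem degGamma_eq_cpow_mul_Gamma_mul_Gamma_div {l : ℝ} (hl : 0 < l) {z : ℂ} (hz : 0 < z.re)
    (hz' : z.re < 1 / l) :
    degGamma l z = (l : ℂ) ^ (-z) * Gamma z * Gamma (1 / l - z) / Gamma (1 / l) := by
  have hw : 0 < (1 / l - z : ℂ).re := by
    rw [sub_re, ← ofReal_one, ← ofReal_div, ofReal_re]
    linarith
  have hl' : Gamma (1 / l) ≠ 0 := by
    refine Gamma_ne_zero_of_re_pos ?_
    rw [← ofReal_one, ← ofReal_div, ofReal_re]
    positivity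
  have hbeta := Gamma_mul_Gamma_eq_betaIntegral hz hw
  rw [add_sub_cancel] at hbeta
  rw [degGamma_eq_cpow_mul_betaIntegral hl, mul_assoc, hbeta]
  field_simp

lemma mul_exp_mul_prod_eq_invGammaPartialProd_mul (z w : ℂ) (N : ℕ) :
    z * w * exp (γ * (z + w)) *
        ∏ n ∈ range N, exp (-((z + w) / (n + 1))) * (1 + z / (n + 1)) * (1 + w / (n + 1)) =
      invGammaPartialProd z N * invGammaPartialProd w N := by
  have hfactor : ∀ n : ℕ, exp (-((z + w) / (n + 1))) * (1 + z / (n + 1)) * (1 + w / (n + 1)) =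
      (1 + z / (n + 1)) * exp (-(z / (n + 1))) * ((1 + w / (n + 1)) * exp (-(w / (n + 1)))) := by
    intro n
    rw [add_div, neg_add, exp_add]
    ring
  rw [prod_congr rfl fun n _ => hfactor n, prod_mul_distrib, mul_add, exp_add,
    invGammaPartialProd, invGammaPartialProd]
  ring

theorem degGamma_weierstrass (l : ℝ) (hl : l ∈ Set.Ioo (0 : ℝ) 1)
    (z : ℂ) (hz : 0 < z.re) (hz' : z.re < 1 / l) :
    Tendsto (fun N : ℕ =>
        (l : ℂ) ^ z * Complex.Gamma (1 / l) * z * ((1 / l : ℂ) - z) *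
          Complex.exp ((Real.eulerMascheroniConstant : ℂ) / l) *
          ∏ n ∈ Finset.range N,
            Complex.exp (-(1 / ((n + 1) * l : ℂ))) * (1 + z / (n + 1)) *
              (1 + ((1 / l : ℂ) - z) / (n + 1)))
      atTop (nhds (1 / degGamma l z)) := by
  have hsum : (1 / l : ℂ) = z + (1 / l - z) := by ring
  have hdiv : ∀ n : ℕ, 1 / ((n + 1) * l : ℂ) = 1 / l / (n + 1) := fun n => by
    rw [div_div, mul_comm]
  have hlim : 1 / degGamma l z =
      (l : ℂ) ^ z * Gamma (1 / l) * ((Gamma z)⁻¹ * (Gamma (1 / l - z))⁻¹) := by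
    rw [degGamma_eq_cpow_mul_Gamma_mul_Gamma_div hl.1 hz hz', cpow_neg]
    simp only [div_eq_mul_inv, mul_inv, inv_inv]
    ring
  rw [hlim]
  refine (((tendsto_invGammaPartialProd z).mul (tendsto_invGammaPartialProd (1 / l - z))).const_mul
    ((l : ℂ) ^ z * Gamma (1 / l))).congr fun N => ?_
  rw [← mul_exp_mul_prod_eq_invGammaPartialProd_mul, ← hsum, div_eq_mul_one_div (γ : ℂ)]
  simp only [hdiv, mul_assoc]
end
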